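/- arXiv:2008.10547 — 5 statements merged into one kernel-verified Lean document; each statement's English description precedes it below -/
import Mathlib

section
/- Suppose additionally that V Vᵀ x_n = x_n for all n. Then for every n = 1, …, N, the approximation errors of the Newton-step and infinitesimal-jackknife estimates in the full D-dimensional problem equal those of the restricted R-dimensional problem: |x_nᵀ θ̂_{NS,∖n} − x_nᵀ θ_{∖n}| = |x̃_nᵀ φ̂_{NS,∖n} − x̃_nᵀ φ_{∖n}| and |x_nᵀ θ̂_{IJ,∖n} − x_nᵀ θ_{∖n}| = |x̃_nᵀ φ̂_{IJ,∖n} − x̃_nᵀ φ_{∖n}|. -/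
open Matrix BigOperators RealInnerProductSpace

/-!
Every covariate lies in the range of `V`, so for `θ` in ℝ^D the data term depends only on `Vᵀ θ`,
while the ridge penalty can only decrease when `θ` is replaced by `V Vᵀ θ`. Hence `V` maps the
minimizers of the restricted objectives (full and leave-one-out) to those of the original ones,
so the evaluation points `x_nᵀ θ̂`, and with them all derivatives `D_n^{(k)}`, agree. The Hessians
satisfy `H = V H_R Vᵀ + λ (1 - V Vᵀ)`, so `H⁻¹ V = V H_R⁻¹`: the base point and the correction
step of the IJ and NS estimates are the images under `V` of their restricted counterparts, and
`V` preserves dot products.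
-/
section OrthonormalColumns

variable {K : Type*} [CommRing K] {Dn Rn : Type*} [Fintype Rn]

theorem Matrix.mulVec_dotProduct_eq_dotProduct_transpose_mulVec [Fintype Dn]
    (V : Matrix Dn Rn K) (u : Rn → K) (θ : Dn → K) : (V *ᵥ u) ⬝ᵥ θ = u ⬝ᵥ (Vᵀ *ᵥ θ) := by
  rw [dotProduct_comm, dotProduct_transpose_mulVec]

theorem Matrix.vecMulVec_mulVec_self (V : Matrix Dn Rn K) (u : Rn → K) :
    vecMulVec (V *ᵥ u) (V *ᵥ u) = V * vecMulVec u u * Vᵀ := by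
  rw [mul_vecMulVec, vecMulVec_mul, vecMul_transpose]

theorem Matrix.smul_sum_vecMulVec_mulVec_add_smul_one {ι : Type*} [Fintype Dn]
    [DecidableEq Dn] [DecidableEq Rn] (V : Matrix Dn Rn K) (s : Finset ι) (a lam : K)
    (d : ι → K) (u : ι → Rn → K) :
    a • ∑ m ∈ s, d m • vecMulVec (V *ᵥ u m) (V *ᵥ u m) + lam • 1 =
      V * (a • ∑ m ∈ s, d m • vecMulVec (u m) (u m) + lam • 1) * Vᵀ + lam • (1 - V * Vᵀ) := by
  have hsum : ∑ m ∈ s, d m • vecMulVec (V *ᵥ u m) (V *ᵥ u m) =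
      V * (∑ m ∈ s, d m • vecMulVec (u m) (u m)) * Vᵀ := by
    simp only [vecMulVec_mulVec_self, Matrix.mul_sum, Matrix.sum_mul, Matrix.mul_smul,
      Matrix.smul_mul]
  rw [hsum, Matrix.mul_add, Matrix.add_mul, Matrix.mul_smul, Matrix.smul_mul, Matrix.mul_smul,
    Matrix.smul_mul, Matrix.mul_one, smul_sub]
  abel

variable [Fintype Dn] [DecidableEq Rn] {V : Matrix Dn Rn K}

theorem Matrix.mulVec_dotProduct_mulVec_of_transpose_mul_self (hV : Vᵀ * V = 1)
    (u v : Rn → K) : (V *ᵥ u) ⬝ᵥ (V *ᵥ v) = u ⬝ᵥ v := by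
  rw [mulVec_dotProduct_eq_dotProduct_transpose_mulVec, mulVec_mulVec, hV, one_mulVec]

end OrthonormalColumns

/-- The matrix acts as `A` on the range of `V` and as `lam` on its orthogonal complement, so it is
invertible exactly when `A` is; in the singular case both sides are `0` (junk inverses). -/
theorem Matrix.inv_conj_add_smul_compl_mul {K : Type*} [Field K]
    {Dn Rn : Type*} [Fintype Dn] [Fintype Rn] [DecidableEq Dn] [DecidableEq Rn]
    {V : Matrix Dn Rn K} (hV : Vᵀ * V = 1) (A : Matrix Rn Rn K) {lam : K} (hlam : lam ≠ 0) :
    (V * A * Vᵀ + lam • (1 - V * Vᵀ))⁻¹ * V = V * A⁻¹ := by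
  set P : Matrix Dn Dn K := 1 - V * Vᵀ
  have hPV : P * V = 0 := by
    rw [Matrix.sub_mul, Matrix.one_mul, Matrix.mul_assoc, hV, Matrix.mul_one, sub_self]
  have hVP : Vᵀ * P = 0 := by
    rw [Matrix.mul_sub, Matrix.mul_one, ← Matrix.mul_assoc, hV, Matrix.one_mul, sub_self]
  have hPP : P * P = P := by
    change P * (1 - V * Vᵀ) = P
    rw [Matrix.mul_sub, Matrix.mul_one, ← Matrix.mul_assoc, hPV, Matrix.zero_mul, sub_zero]
  set M := V * A * Vᵀ + lam • P
  have hMV : M * V = V * A := by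
    rw [Matrix.add_mul, Matrix.smul_mul, hPV, smul_zero, add_zero, Matrix.mul_assoc,
      hV, Matrix.mul_one]
  have hVM : Vᵀ * M = A * Vᵀ := by
    rw [Matrix.mul_add, Matrix.mul_smul, hVP, smul_zero, add_zero, ← Matrix.mul_assoc,
      ← Matrix.mul_assoc, hV, Matrix.one_mul]
  have hMP : M * P = lam • P := by
    rw [Matrix.add_mul, Matrix.smul_mul, hPP, Matrix.mul_assoc, hVP, Matrix.mul_zero, zero_add]
  by_cases hA : IsUnit A.det
  · have hMinv : M * (V * A⁻¹ * Vᵀ + lam⁻¹ • P) = 1 := by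
      rw [Matrix.mul_add, Matrix.mul_smul, hMP, smul_smul, inv_mul_cancel₀ hlam, one_smul,
        ← Matrix.mul_assoc, ← Matrix.mul_assoc, hMV, Matrix.mul_assoc V, mul_nonsing_inv _ hA,
        Matrix.mul_one, add_sub_cancel]
    rw [inv_eq_right_inv hMinv, Matrix.add_mul, Matrix.smul_mul, hPV, smul_zero, add_zero,
      Matrix.mul_assoc, hV, Matrix.mul_one]
  · have hM : ¬IsUnit M.det := fun hM =>
      hA (isUnit_det_of_right_inverse (B := Vᵀ * M⁻¹ * V) (by
        rw [← Matrix.mul_assoc, ← Matrix.mul_assoc, ← hVM, Matrix.mul_assoc Vᵀ,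
          mul_nonsing_inv _ hM, Matrix.mul_one, hV]))
    rw [nonsing_inv_apply_not_isUnit _ hA, nonsing_inv_apply_not_isUnit _ hM, Matrix.zero_mul,
      Matrix.mul_zero]

theorem Matrix.mulVec_dotProduct_add_smul_inv_mulVec {K : Type*} [CommRing K]
    {Dn Rn : Type*} [Fintype Dn] [Fintype Rn] [DecidableEq Dn] [DecidableEq Rn]
    {V : Matrix Dn Rn K} (hV : Vᵀ * V = 1) {M : Matrix Dn Dn K} {A : Matrix Rn Rn K}
    (hMA : M⁻¹ * V = V * A⁻¹) (u φ : Rn → K) (c : K) :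
    (V *ᵥ u) ⬝ᵥ (V *ᵥ φ + c • (M⁻¹ *ᵥ (V *ᵥ u))) = u ⬝ᵥ (φ + c • (A⁻¹ *ᵥ u)) := by
  rw [mulVec_mulVec, hMA, ← mulVec_mulVec, ← mulVec_smul, ← mulVec_add,
    mulVec_dotProduct_mulVec_of_transpose_mul_self hV]

theorem Matrix.transpose_mulVec_dotProduct_self_le {Dn Rn : Type*} [Fintype Dn] [Fintype Rn]
    [DecidableEq Rn] {V : Matrix Dn Rn ℝ} (hV : Vᵀ * V = 1) (θ : Dn → ℝ) :
    (Vᵀ *ᵥ θ) ⬝ᵥ (Vᵀ *ᵥ θ) ≤ θ ⬝ᵥ θ := by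
  set p := V *ᵥ (Vᵀ *ᵥ θ)
  have hpθ : p ⬝ᵥ θ = (Vᵀ *ᵥ θ) ⬝ᵥ (Vᵀ *ᵥ θ) :=
    mulVec_dotProduct_eq_dotProduct_transpose_mulVec _ _ _
  have hpp : p ⬝ᵥ p = (Vᵀ *ᵥ θ) ⬝ᵥ (Vᵀ *ᵥ θ) :=
    mulVec_dotProduct_mulVec_of_transpose_mul_self hV _ _
  have hnonneg : 0 ≤ (θ - p) ⬝ᵥ (θ - p) := Finset.sum_nonneg fun i _ => mul_self_nonneg _
  rw [sub_dotProduct, dotProduct_sub, dotProduct_sub, dotProduct_comm θ p] at hnonneg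
  linarith

noncomputable def ridgeObjective {ι Rn : Type*} [Fintype Rn] (L : (ι → ℝ) → ℝ) (lam : ℝ)
    (u : ι → Rn → ℝ) (φ : Rn → ℝ) : ℝ :=
  L (fun m => u m ⬝ᵥ φ) + lam / 2 * (φ ⬝ᵥ φ)

section RidgeObjective

variable {ι Dn Rn : Type*} [Fintype Dn] [Fintype Rn] [DecidableEq Rn] {V : Matrix Dn Rn ℝ}
  (L : (ι → ℝ) → ℝ) (lam : ℝ) (u : ι → Rn → ℝ)

theorem ridgeObjective_mulVec (hV : Vᵀ * V = 1) (φ : Rn → ℝ) :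
    ridgeObjective L lam (fun m => V *ᵥ u m) (V *ᵥ φ) = ridgeObjective L lam u φ := by
  simp only [ridgeObjective, mulVec_dotProduct_mulVec_of_transpose_mul_self hV]

theorem ridgeObjective_transpose_mulVec_le (hV : Vᵀ * V = 1) (hlam : 0 ≤ lam)
    (θ : Dn → ℝ) :
    ridgeObjective L lam u (Vᵀ *ᵥ θ) ≤ ridgeObjective L lam (fun m => V *ᵥ u m) θ := by
  simp only [ridgeObjective, mulVec_dotProduct_eq_dotProduct_transpose_mulVec V]
  gcongr
  exact transpose_mulVec_dotProduct_self_le hV θ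

theorem ridgeObjective_mulVec_le_of_le (hV : Vᵀ * V = 1) (hlam : 0 ≤ lam)
    {φ : Rn → ℝ} (hφ : ∀ φ', ridgeObjective L lam u φ ≤ ridgeObjective L lam u φ') (θ : Dn → ℝ) :
    ridgeObjective L lam (fun m => V *ᵥ u m) (V *ᵥ φ) ≤
      ridgeObjective L lam (fun m => V *ᵥ u m) θ := by
  rw [ridgeObjective_mulVec L lam u hV]
  exact (hφ _).trans (ridgeObjective_transpose_mulVec_le L lam u hV hlam θ)

end RidgeObjective

theorem stmt_1_general
    (N D : ℕ)
    (x : Fin N → Fin D → ℝ) (y : Fin N → ℝ)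
    (lam : ℝ) (hlam : 0 < lam)
    (f : ℝ → ℝ → ℝ)
    (F : (Fin D → ℝ) → ℝ)
    (hF : F = fun θ => (1 / N : ℝ) * ∑ n, f (x n ⬝ᵥ θ) (y n) + lam / 2 * (θ ⬝ᵥ θ))
    (Floo : Fin N → (Fin D → ℝ) → ℝ)
    (hFloo : ∀ n, Floo n = fun θ =>
      (1 / N : ℝ) * ∑ m ∈ Finset.univ.erase n, f (x m ⬝ᵥ θ) (y m) + lam / 2 * (θ ⬝ᵥ θ))
    (θhat : Fin D → ℝ)
    (hθhatU : ∀ θ, (∀ θ', F θ ≤ F θ') → θ = θhat)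
    (θloo : Fin N → Fin D → ℝ)
    (hθlooU : ∀ n θ, (∀ θ', Floo n θ ≤ Floo n θ') → θ = θloo n)
    (D1 : Fin N → ℝ)
    (hD1 : ∀ n, D1 n = deriv (fun z => f z (y n)) (x n ⬝ᵥ θhat))
    (D2 : Fin N → ℝ)
    (hD2 : ∀ n, D2 n = iteratedDeriv 2 (fun z => f z (y n)) (x n ⬝ᵥ θhat))
    (H : Matrix (Fin D) (Fin D) ℝ)
    (hH : H = (1 / N : ℝ) • ∑ m, D2 m • Matrix.vecMulVec (x m) (x m) + lam • 1)
    (Hloo : Fin N → Matrix (Fin D) (Fin D) ℝ)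
    (hHloo : ∀ n, Hloo n =
      (1 / N : ℝ) • ∑ m ∈ Finset.univ.erase n, D2 m • Matrix.vecMulVec (x m) (x m) + lam • 1)
    (θIJ : Fin N → Fin D → ℝ)
    (hθIJ : ∀ n, θIJ n = θhat + (D1 n / N) • (H⁻¹ *ᵥ x n))
    (θNS : Fin N → Fin D → ℝ)
    (hθNS : ∀ n, θNS n = θhat + (D1 n / N) • ((Hloo n)⁻¹ *ᵥ x n))
    (R : ℕ)
    (V : Matrix (Fin D) (Fin R) ℝ) (hV : Vᵀ * V = 1)
    (xt : Fin N → Fin R → ℝ) (hxt : ∀ n, xt n = Vᵀ *ᵥ x n)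
    (hproj : ∀ n, V *ᵥ (Vᵀ *ᵥ x n) = x n)
    (FR : (Fin R → ℝ) → ℝ)
    (hFR : FR = fun φ => (1 / N : ℝ) * ∑ n, f (xt n ⬝ᵥ φ) (y n) + lam / 2 * (φ ⬝ᵥ φ))
    (FRloo : Fin N → (Fin R → ℝ) → ℝ)
    (hFRloo : ∀ n, FRloo n = fun φ =>
      (1 / N : ℝ) * ∑ m ∈ Finset.univ.erase n, f (xt m ⬝ᵥ φ) (y m) + lam / 2 * (φ ⬝ᵥ φ))
    (φhat : Fin R → ℝ)
    (hφhat : ∀ φ, FR φhat ≤ FR φ)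
    (φloo : Fin N → Fin R → ℝ)
    (hφloo : ∀ n φ, FRloo n (φloo n) ≤ FRloo n φ)
    (Dt1 : Fin N → ℝ)
    (hDt1 : ∀ n, Dt1 n = deriv (fun z => f z (y n)) (xt n ⬝ᵥ φhat))
    (Dt2 : Fin N → ℝ)
    (hDt2 : ∀ n, Dt2 n = iteratedDeriv 2 (fun z => f z (y n)) (xt n ⬝ᵥ φhat))
    (HR : Matrix (Fin R) (Fin R) ℝ)
    (hHR : HR = (1 / N : ℝ) • ∑ m, Dt2 m • Matrix.vecMulVec (xt m) (xt m) + lam • 1)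
    (HRloo : Fin N → Matrix (Fin R) (Fin R) ℝ)
    (hHRloo : ∀ n, HRloo n =
      (1 / N : ℝ) • ∑ m ∈ Finset.univ.erase n, Dt2 m • Matrix.vecMulVec (xt m) (xt m) + lam • 1)
    (φIJ : Fin N → Fin R → ℝ)
    (hφIJ : ∀ n, φIJ n = φhat + (Dt1 n / N) • (HR⁻¹ *ᵥ xt n))
    (φNS : Fin N → Fin R → ℝ)
    (hφNS : ∀ n, φNS n = φhat + (Dt1 n / N) • ((HRloo n)⁻¹ *ᵥ xt n))
    :
    ∀ n : Fin N,
      |x n ⬝ᵥ θNS n - x n ⬝ᵥ θloo n| = |xt n ⬝ᵥ φNS n - xt n ⬝ᵥ φloo n| ∧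
      |x n ⬝ᵥ θIJ n - x n ⬝ᵥ θloo n| = |xt n ⬝ᵥ φIJ n - xt n ⬝ᵥ φloo n| := by
  obtain rfl : x = fun n => V *ᵥ xt n := funext fun n => by rw [hxt, hproj]
  obtain rfl : Floo = _ := funext hFloo
  obtain rfl : FRloo = _ := funext hFRloo
  subst hF hFR
  have hθhat : V *ᵥ φhat = θhat :=
    hθhatU _ (ridgeObjective_mulVec_le_of_le (fun z => (1 / N : ℝ) * ∑ n, f (z n) (y n))
      lam xt hV hlam.le hφhat)
  have hθloo n : V *ᵥ φloo n = θloo n :=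
    hθlooU n _ (ridgeObjective_mulVec_le_of_le
      (fun z => (1 / N : ℝ) * ∑ m ∈ Finset.univ.erase n, f (z m) (y m)) lam xt hV hlam.le
      (hφloo n))
  have hdot n (φ : Fin R → ℝ) : (V *ᵥ xt n) ⬝ᵥ (V *ᵥ φ) = xt n ⬝ᵥ φ :=
    mulVec_dotProduct_mulVec_of_transpose_mul_self hV _ _
  obtain rfl : D1 = Dt1 := funext fun n => by rw [hD1, hDt1, ← hθhat, hdot]
  obtain rfl : D2 = Dt2 := funext fun n => by rw [hD2, hDt2, ← hθhat, hdot]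
  have hHinv : H⁻¹ * V = V * HR⁻¹ := by
    rw [hH, smul_sum_vecMulVec_mulVec_add_smul_one, ← hHR,
      inv_conj_add_smul_compl_mul hV _ hlam.ne']
  have hHlooinv n : (Hloo n)⁻¹ * V = V * (HRloo n)⁻¹ := by
    rw [hHloo, smul_sum_vecMulVec_mulVec_add_smul_one, ← hHRloo,
      inv_conj_add_smul_compl_mul hV _ hlam.ne']
  intro n
  rw [hθNS, hφNS, hθIJ, hφIJ, ← hθhat, ← hθloo, hdot,
    mulVec_dotProduct_add_smul_inv_mulVec hV (hHlooinv n),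
    mulVec_dotProduct_add_smul_inv_mulVec hV hHinv]
  exact ⟨rfl, rfl⟩

theorem stmt_1
    (N D : ℕ) (hN : 1 ≤ N) (hD : 1 ≤ D)
    (x : Fin N → Fin D → ℝ) (y : Fin N → ℝ)
    (lam : ℝ) (hlam : 0 < lam)
    (f : ℝ → ℝ → ℝ)
    (hconv : ∀ c : ℝ, ConvexOn ℝ Set.univ (fun z => f z c))
    (hsmooth : ∀ c : ℝ, ContDiff ℝ 2 (fun z => f z c))
    (F : (Fin D → ℝ) → ℝ)
    (hF : F = fun θ => (1 / N : ℝ) * ∑ n, f (x n ⬝ᵥ θ) (y n) + lam / 2 * (θ ⬝ᵥ θ))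
    (Floo : Fin N → (Fin D → ℝ) → ℝ)
    (hFloo : ∀ n, Floo n = fun θ =>
      (1 / N : ℝ) * ∑ m ∈ Finset.univ.erase n, f (x m ⬝ᵥ θ) (y m) + lam / 2 * (θ ⬝ᵥ θ))
    (θhat : Fin D → ℝ)
    (hθhat : ∀ θ, F θhat ≤ F θ)
    (hθhatU : ∀ θ, (∀ θ', F θ ≤ F θ') → θ = θhat)
    (θloo : Fin N → Fin D → ℝ)
    (hθloo : ∀ n θ, Floo n (θloo n) ≤ Floo n θ)
    (hθlooU : ∀ n θ, (∀ θ', Floo n θ ≤ Floo n θ') → θ = θloo n)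
    (D1 : Fin N → ℝ)
    (hD1 : ∀ n, D1 n = deriv (fun z => f z (y n)) (x n ⬝ᵥ θhat))
    (D2 : Fin N → ℝ)
    (hD2 : ∀ n, D2 n = iteratedDeriv 2 (fun z => f z (y n)) (x n ⬝ᵥ θhat))
    (H : Matrix (Fin D) (Fin D) ℝ)
    (hH : H = (1 / N : ℝ) • ∑ m, D2 m • Matrix.vecMulVec (x m) (x m) + lam • 1)
    (Hloo : Fin N → Matrix (Fin D) (Fin D) ℝ)
    (hHloo : ∀ n, Hloo n =
      (1 / N : ℝ) • ∑ m ∈ Finset.univ.erase n, D2 m • Matrix.vecMulVec (x m) (x m) + lam • 1)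
    (θIJ : Fin N → Fin D → ℝ)
    (hθIJ : ∀ n, θIJ n = θhat + (D1 n / N) • (H⁻¹ *ᵥ x n))
    (θNS : Fin N → Fin D → ℝ)
    (hθNS : ∀ n, θNS n = θhat + (D1 n / N) • ((Hloo n)⁻¹ *ᵥ x n))
    (R : ℕ)
    (V : Matrix (Fin D) (Fin R) ℝ) (hV : Vᵀ * V = 1)
    (xt : Fin N → Fin R → ℝ) (hxt : ∀ n, xt n = Vᵀ *ᵥ x n)
    (hproj : ∀ n, V *ᵥ (Vᵀ *ᵥ x n) = x n)
    (FR : (Fin R → ℝ) → ℝ)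
    (hFR : FR = fun φ => (1 / N : ℝ) * ∑ n, f (xt n ⬝ᵥ φ) (y n) + lam / 2 * (φ ⬝ᵥ φ))
    (FRloo : Fin N → (Fin R → ℝ) → ℝ)
    (hFRloo : ∀ n, FRloo n = fun φ =>
      (1 / N : ℝ) * ∑ m ∈ Finset.univ.erase n, f (xt m ⬝ᵥ φ) (y m) + lam / 2 * (φ ⬝ᵥ φ))
    (φhat : Fin R → ℝ)
    (hφhat : ∀ φ, FR φhat ≤ FR φ)
    (hφhatU : ∀ φ, (∀ φ', FR φ ≤ FR φ') → φ = φhat)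
    (φloo : Fin N → Fin R → ℝ)
    (hφloo : ∀ n φ, FRloo n (φloo n) ≤ FRloo n φ)
    (hφlooU : ∀ n φ, (∀ φ', FRloo n φ ≤ FRloo n φ') → φ = φloo n)
    (Dt1 : Fin N → ℝ)
    (hDt1 : ∀ n, Dt1 n = deriv (fun z => f z (y n)) (xt n ⬝ᵥ φhat))
    (Dt2 : Fin N → ℝ)
    (hDt2 : ∀ n, Dt2 n = iteratedDeriv 2 (fun z => f z (y n)) (xt n ⬝ᵥ φhat))
    (HR : Matrix (Fin R) (Fin R) ℝ)
    (hHR : HR = (1 / N : ℝ) • ∑ m, Dt2 m • Matrix.vecMulVec (xt m) (xt m) + lam • 1)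
    (HRloo : Fin N → Matrix (Fin R) (Fin R) ℝ)
    (hHRloo : ∀ n, HRloo n =
      (1 / N : ℝ) • ∑ m ∈ Finset.univ.erase n, Dt2 m • Matrix.vecMulVec (xt m) (xt m) + lam • 1)
    (φIJ : Fin N → Fin R → ℝ)
    (hφIJ : ∀ n, φIJ n = φhat + (Dt1 n / N) • (HR⁻¹ *ᵥ xt n))
    (φNS : Fin N → Fin R → ℝ)
    (hφNS : ∀ n, φNS n = φhat + (Dt1 n / N) • ((HRloo n)⁻¹ *ᵥ xt n))
    :
    ∀ n : Fin N,
      |x n ⬝ᵥ θNS n - x n ⬝ᵥ θloo n| = |xt n ⬝ᵥ φNS n - xt n ⬝ᵥ φloo n| ∧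
      |x n ⬝ᵥ θIJ n - x n ⬝ᵥ θloo n| = |xt n ⬝ᵥ φIJ n - xt n ⬝ᵥ φloo n| :=
  stmt_1_general N D x y lam hlam f F hF Floo hFloo θhat hθhatU θloo hθlooU D1 hD1 D2 hD2 H hH Hloo
    hHloo θIJ hθIJ θNS hθNS R V hV xt hxt hproj FR hFR FRloo hFRloo φhat hφhat φloo hφloo Dt1 hDt1
    Dt2 hDt2 HR hHR HRloo hHRloo φIJ hφIJ φNS hφNS
end

section
/- Suppose ⟨x_m, ε_n⟩ = 0 for all m, n ∈ {1, …, N}. Then ‖θ_ELR − θ_ALR‖₂ ≤ (1/(N λ)) · ‖Σ_{n=1}^N ∂₁f(x_nᵀ θ_ELR, y_n) · ε_n‖₂, where ∂₁f denotes the derivative of f in its first argument. -/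
/-!
Testing the first-order condition for `θELR` against `ε m` and using `x n ⬝ᵥ ε m = 0` and `λ ≠ 0`
gives `θELR ⬝ᵥ ε m = 0`. Hence `(x n + ε n) ⬝ᵥ θELR = x n ⬝ᵥ θELR`, so the gradient of the
perturbed objective at `θELR` is the gradient of the unperturbed one (which vanishes) plus `g / N`.
The perturbed objective has a `λ`-strongly monotone gradient vanishing at `θALR`, so
`λ ‖θELR - θALR‖² ≤ (g / N) ⬝ᵥ (θELR - θALR)`, and Cauchy–Schwarz concludes.
-/

open Matrix BigOperators RealInnerProductSpace

theorem Matrix.dotProduct_le_sqrt_mul_sqrt {n : Type*} [Fintype n] (u v : n → ℝ) :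
    u ⬝ᵥ v ≤ √(u ⬝ᵥ u) * √(v ⬝ᵥ v) := by
  simpa [dotProduct, sq] using Real.sum_mul_le_sqrt_mul_sqrt Finset.univ u v

theorem Matrix.sqrt_smul_dotProduct_smul {n : Type*} [Fintype n] (c : ℝ) (v : n → ℝ) :
    √((c • v) ⬝ᵥ (c • v)) = |c| * √(v ⬝ᵥ v) := by
  rw [smul_dotProduct, dotProduct_smul, smul_eq_mul, smul_eq_mul, ← mul_assoc,
    Real.sqrt_mul (mul_self_nonneg c), Real.sqrt_mul_self_eq_abs]

theorem Matrix.mul_sqrt_dotProduct_self_le {n : Type*} [Fintype n] {lam : ℝ} {u v : n → ℝ}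
    (h : lam * (u ⬝ᵥ u) ≤ v ⬝ᵥ u) : lam * √(u ⬝ᵥ u) ≤ √(v ⬝ᵥ v) := by
  have hCS := dotProduct_le_sqrt_mul_sqrt v u
  rcases (Real.sqrt_nonneg (u ⬝ᵥ u)).eq_or_lt with h0 | hpos
  · rw [← h0, mul_zero]
    exact Real.sqrt_nonneg _
  · refine le_of_mul_le_mul_right ?_ hpos
    have huu : √(u ⬝ᵥ u) * √(u ⬝ᵥ u) = u ⬝ᵥ u :=
      Real.mul_self_sqrt (by simpa using dotProduct_self_star_nonneg u)
    calc lam * √(u ⬝ᵥ u) * √(u ⬝ᵥ u) = lam * (u ⬝ᵥ u) := by rw [mul_assoc, huu]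
      _ ≤ √(v ⬝ᵥ v) * √(u ⬝ᵥ u) := h.trans hCS

theorem ConvexOn.deriv_sub_mul_sub_nonneg {φ : ℝ → ℝ} (hφ : ConvexOn ℝ Set.univ φ)
    (hd : Differentiable ℝ φ) (r s : ℝ) : 0 ≤ (deriv φ s - deriv φ r) * (s - r) := by
  have hmono : Monotone (deriv φ) := monotoneOn_univ.mp (hφ.monotoneOn_deriv fun x _ => hd x)
  exact (hmono.monovary monotone_id).sub_mul_sub_nonneg r s

theorem Matrix.hasDerivAt_dotProduct_add_smul {n : Type*} [Fintype n] (a θ v : n → ℝ) (t : ℝ) :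
    HasDerivAt (fun t : ℝ => a ⬝ᵥ (θ + t • v)) (a ⬝ᵥ v) t := by
  simp_rw [dotProduct_add, dotProduct_smul, smul_eq_mul]
  simpa using ((hasDerivAt_id t).mul_const (a ⬝ᵥ v)).const_add (a ⬝ᵥ θ)

theorem Matrix.hasDerivAt_dotProduct_self_add_smul {n : Type*} [Fintype n] (θ v : n → ℝ) (t : ℝ) :
    HasDerivAt (fun t : ℝ => (θ + t • v) ⬝ᵥ (θ + t • v)) (2 * ((θ + t • v) ⬝ᵥ v)) t := by
  have h := (hasDerivAt_dotProduct_add_smul θ θ v t).fun_add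
    ((hasDerivAt_id' t).fun_mul (hasDerivAt_dotProduct_add_smul v θ v t))
  have hexpand : (fun t : ℝ => (θ + t • v) ⬝ᵥ (θ + t • v)) =
      fun t => θ ⬝ᵥ (θ + t • v) + t * (v ⬝ᵥ (θ + t • v)) := by
    funext s
    rw [add_dotProduct, smul_dotProduct, smul_eq_mul]
  rw [hexpand]
  refine h.congr_deriv ?_
  simp only [dotProduct_add, add_dotProduct, dotProduct_smul, smul_dotProduct, smul_eq_mul,
    dotProduct_comm v θ]
  ring

section RegLoss

variable {ι n : Type*} [Fintype ι] [Fintype n]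

noncomputable def regLoss (w : ℝ) (φ : ι → ℝ → ℝ) (a : ι → n → ℝ) (lam : ℝ) (θ : n → ℝ) : ℝ :=
  w * ∑ i, φ i (a i ⬝ᵥ θ) + lam / 2 * (θ ⬝ᵥ θ)

noncomputable def regLossGrad (w : ℝ) (φ : ι → ℝ → ℝ) (a : ι → n → ℝ) (lam : ℝ) (θ : n → ℝ) :
    n → ℝ :=
  w • ∑ i, deriv (φ i) (a i ⬝ᵥ θ) • a i + lam • θ

variable {w lam : ℝ} {φ : ι → ℝ → ℝ} {a : ι → n → ℝ}

theorem regLossGrad_dotProduct (θ v : n → ℝ) :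
    regLossGrad w φ a lam θ ⬝ᵥ v =
      w * ∑ i, deriv (φ i) (a i ⬝ᵥ θ) * (a i ⬝ᵥ v) + lam * (θ ⬝ᵥ v) := by
  simp only [regLossGrad, add_dotProduct, smul_dotProduct, sum_dotProduct, smul_eq_mul]

theorem hasDerivAt_regLoss_add_smul (hφ : ∀ i, Differentiable ℝ (φ i)) (θ v : n → ℝ) (t : ℝ) :
    HasDerivAt (fun t : ℝ => regLoss w φ a lam (θ + t • v))
      (regLossGrad w φ a lam (θ + t • v) ⬝ᵥ v) t := by
  have hloss : HasDerivAt (fun t : ℝ => ∑ i, φ i (a i ⬝ᵥ (θ + t • v)))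
      (∑ i, deriv (φ i) (a i ⬝ᵥ (θ + t • v)) * (a i ⬝ᵥ v)) t :=
    HasDerivAt.fun_sum fun i _ =>
      (hφ i _).hasDerivAt.comp t (hasDerivAt_dotProduct_add_smul (a i) θ v t)
  refine ((hloss.const_mul w).add
    ((hasDerivAt_dotProduct_self_add_smul θ v t).const_mul (lam / 2))).congr_deriv ?_
  rw [regLossGrad_dotProduct]
  ring

theorem regLossGrad_eq_zero_of_forall_le (hφ : ∀ i, Differentiable ℝ (φ i)) {θ : n → ℝ}
    (hmin : ∀ θ', regLoss w φ a lam θ ≤ regLoss w φ a lam θ') : regLossGrad w φ a lam θ = 0 := by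
  have hdir : ∀ v, regLossGrad w φ a lam θ ⬝ᵥ v = 0 := fun v => by
    have hloc : IsLocalMin (fun t : ℝ => regLoss w φ a lam (θ + t • v)) 0 :=
      Filter.Eventually.of_forall fun t => by simpa using hmin (θ + t • v)
    simpa using hloc.hasDerivAt_eq_zero (hasDerivAt_regLoss_add_smul hφ θ v 0)
  exact dotProduct_self_eq_zero.mp (hdir _)

theorem dotProduct_eq_zero_of_regLossGrad_eq_zero (hlam : lam ≠ 0) {θ e : n → ℝ}
    (hgrad : regLossGrad w φ a lam θ = 0) (he : ∀ i, a i ⬝ᵥ e = 0) : θ ⬝ᵥ e = 0 := by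
  have h := regLossGrad_dotProduct (w := w) (φ := φ) (a := a) (lam := lam) θ e
  simpa [hgrad, he, hlam] using h.symm

theorem regLossGrad_add {e : ι → n → ℝ} {θ : n → ℝ} (he : ∀ i, θ ⬝ᵥ e i = 0) :
    regLossGrad w φ (fun i => a i + e i) lam θ =
      regLossGrad w φ a lam θ + w • ∑ i, deriv (φ i) (a i ⬝ᵥ θ) • e i := by
  have hdot : ∀ i, (a i + e i) ⬝ᵥ θ = a i ⬝ᵥ θ := fun i => by
    rw [add_dotProduct, dotProduct_comm (e i), he, add_zero]
  simp only [regLossGrad, hdot, smul_add, Finset.sum_add_distrib]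
  abel

theorem mul_dotProduct_self_le_regLossGrad_sub (hw : 0 ≤ w)
    (hconv : ∀ i, ConvexOn ℝ Set.univ (φ i)) (hφ : ∀ i, Differentiable ℝ (φ i)) (θ θ' : n → ℝ) :
    lam * ((θ - θ') ⬝ᵥ (θ - θ')) ≤
      (regLossGrad w φ a lam θ - regLossGrad w φ a lam θ') ⬝ᵥ (θ - θ') := by
  have hsum :
      0 ≤ ∑ i, (deriv (φ i) (a i ⬝ᵥ θ) - deriv (φ i) (a i ⬝ᵥ θ')) * (a i ⬝ᵥ θ - a i ⬝ᵥ θ') :=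
    Finset.sum_nonneg fun i _ => (hconv i).deriv_sub_mul_sub_nonneg (hφ i) _ _
  have hexpand : (regLossGrad w φ a lam θ - regLossGrad w φ a lam θ') ⬝ᵥ (θ - θ') =
      w * ∑ i, (deriv (φ i) (a i ⬝ᵥ θ) - deriv (φ i) (a i ⬝ᵥ θ')) * (a i ⬝ᵥ θ - a i ⬝ᵥ θ') +
        lam * ((θ - θ') ⬝ᵥ (θ - θ')) := by
    simp only [sub_dotProduct, regLossGrad_dotProduct, dotProduct_sub, sub_mul, mul_sub,
      Finset.sum_sub_distrib]
    ring
  rw [hexpand]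
  linarith [mul_nonneg hw hsum]

end RegLoss

theorem stmt_5_general
    (N D : ℕ)
    (x ε : Fin N → Fin D → ℝ) (y : Fin N → ℝ)
    (lam : ℝ) (hlam : 0 < lam)
    (f : ℝ → ℝ → ℝ)
    (hconv : ∀ c : ℝ, ConvexOn ℝ Set.univ (fun z => f z c))
    (hsmooth : ∀ c : ℝ, ContDiff ℝ 2 (fun z => f z c))
    (FELR : (Fin D → ℝ) → ℝ)
    (hFELR : FELR = fun θ => (1 / N : ℝ) * ∑ n, f (x n ⬝ᵥ θ) (y n) + lam / 2 * (θ ⬝ᵥ θ))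
    (FALR : (Fin D → ℝ) → ℝ)
    (hFALR : FALR = fun θ => (1 / N : ℝ) * ∑ n, f ((x n + ε n) ⬝ᵥ θ) (y n) + lam / 2 * (θ ⬝ᵥ θ))
    (θELR : Fin D → ℝ) (hθELR : ∀ θ, FELR θELR ≤ FELR θ)
    (θALR : Fin D → ℝ) (hθALR : ∀ θ, FALR θALR ≤ FALR θ)
    (horth : ∀ m n : Fin N, x m ⬝ᵥ ε n = 0)
    (g : Fin D → ℝ)
    (hg : g = ∑ n, deriv (fun z => f z (y n)) (x n ⬝ᵥ θELR) • ε n) :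
    Real.sqrt ((θELR - θALR) ⬝ᵥ (θELR - θALR)) ≤
      1 / (N * lam) * Real.sqrt (g ⬝ᵥ g) := by
  set φ : Fin N → ℝ → ℝ := fun n z => f z (y n)
  have hφ : ∀ n, Differentiable ℝ (φ n) := fun n => (hsmooth (y n)).differentiable two_ne_zero
  subst hFELR hFALR
  -- `hθELR` and `hθALR` now say, up to unfolding, that `θELR` minimizes `regLoss (1 / N) φ x lam`
  -- and `θALR` minimizes `regLoss (1 / N) φ (fun n => x n + ε n) lam`.
  have hgradE : regLossGrad (1 / N) φ x lam θELR = 0 := regLossGrad_eq_zero_of_forall_le hφ hθELR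
  have hgradA : regLossGrad (1 / N) φ (fun n => x n + ε n) lam θALR = 0 :=
    regLossGrad_eq_zero_of_forall_le hφ hθALR
  have hperp : ∀ m, θELR ⬝ᵥ ε m = 0 := fun m =>
    dotProduct_eq_zero_of_regLossGrad_eq_zero hlam.ne' hgradE fun n => horth n m
  have hstrong := mul_dotProduct_self_le_regLossGrad_sub (a := fun n => x n + ε n) (lam := lam)
    (by positivity : (0 : ℝ) ≤ 1 / N) (fun n => hconv (y n)) hφ θELR θALR
  rw [regLossGrad_add hperp, hgradE, hgradA, zero_add, sub_zero, ← hg] at hstrong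
  have hbound := mul_sqrt_dotProduct_self_le hstrong
  rw [sqrt_smul_dotProduct_smul, abs_of_nonneg (by positivity)] at hbound
  calc √((θELR - θALR) ⬝ᵥ (θELR - θALR)) ≤ 1 / N * √(g ⬝ᵥ g) / lam :=
        (le_div_iff₀' hlam).mpr hbound
    _ = 1 / (N * lam) * √(g ⬝ᵥ g) := by ring

theorem stmt_5
    (N D : ℕ) (hN : 1 ≤ N) (hD : 1 ≤ D)
    (x ε : Fin N → Fin D → ℝ) (y : Fin N → ℝ)
    (lam : ℝ) (hlam : 0 < lam)
    (f : ℝ → ℝ → ℝ)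
    (hconv : ∀ c : ℝ, ConvexOn ℝ Set.univ (fun z => f z c))
    (hsmooth : ∀ c : ℝ, ContDiff ℝ 2 (fun z => f z c))
    (FELR : (Fin D → ℝ) → ℝ)
    (hFELR : FELR = fun θ => (1 / N : ℝ) * ∑ n, f (x n ⬝ᵥ θ) (y n) + lam / 2 * (θ ⬝ᵥ θ))
    (FALR : (Fin D → ℝ) → ℝ)
    (hFALR : FALR = fun θ => (1 / N : ℝ) * ∑ n, f ((x n + ε n) ⬝ᵥ θ) (y n) + lam / 2 * (θ ⬝ᵥ θ))
    (θELR : Fin D → ℝ) (hθELR : ∀ θ, FELR θELR ≤ FELR θ)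
    (hθELRU : ∀ θ, (∀ θ', FELR θ ≤ FELR θ') → θ = θELR)
    (θALR : Fin D → ℝ) (hθALR : ∀ θ, FALR θALR ≤ FALR θ)
    (hθALRU : ∀ θ, (∀ θ', FALR θ ≤ FALR θ') → θ = θALR)
    (horth : ∀ m n : Fin N, x m ⬝ᵥ ε n = 0)
    (g : Fin D → ℝ)
    (hg : g = ∑ n, deriv (fun z => f z (y n)) (x n ⬝ᵥ θELR) • ε n) :
    Real.sqrt ((θELR - θALR) ⬝ᵥ (θELR - θALR)) ≤
      1 / (N * lam) * Real.sqrt (g ⬝ᵥ g) :=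
  stmt_5_general N D x ε y lam hlam f hconv hsmooth FELR hFELR FALR hFALR θELR hθELR θALR hθALR
    horth g hg
end

section
/- For every n = 1, …, N, the infinitesimal-jackknife and Newton-step estimates satisfy ‖θ̂_{IJ,∖n} − θ̂_{NS,∖n}‖₂ ≤ (1/(N² λ²)) · |D_n^{(1)}| · D_n^{(2)} · ‖x_n‖₂³; consequently |x_nᵀ θ̂_{IJ,∖n} − x_nᵀ θ̂_{NS,∖n}| ≤ (1/(N² λ²)) · |D_n^{(1)}| · D_n^{(2)} · ‖x_n‖₂⁴. -/
open Matrix BigOperators RealInnerProductSpace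

/-!
Removing observation `n` changes the Hessian by the rank-one term `(D2 n / N) • x xᵀ`, so by
Sherman–Morrison `H⁻¹ x = (1 - c) • Hloo⁻¹ x` with `c = (D2 n / N) * (x ⬝ᵥ H⁻¹ x)`, and the two
estimates differ by `(D1 n / N) * c • Hloo⁻¹ x`. Convexity gives `D2 ≥ 0`, so both matrices
dominate `lam • 1` and their inverses shrink Euclidean norms by at least the factor `lam`; this
bounds `|c|` by `D2 n ‖x‖² / (N lam)` and `‖Hloo⁻¹ x‖` by `‖x‖ / lam`. The bound on the
prediction gap then follows by Cauchy–Schwarz.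
-/

lemma ConvexOn.iteratedDeriv_two_nonneg {g : ℝ → ℝ} (hconv : ConvexOn ℝ Set.univ g)
    (hg : Differentiable ℝ g) (z : ℝ) : 0 ≤ iteratedDeriv 2 g z := by
  rw [iteratedDeriv_succ, iteratedDeriv_one]
  exact Monotone.deriv_nonneg
    (monotoneOn_univ.mp (hconv.monotoneOn_deriv fun x _ => hg x))

namespace Matrix

lemma posDef_of_posSemidef_sub_smul_one {ι : Type*} [DecidableEq ι] {M : Matrix ι ι ℝ}
    {lam : ℝ} (hM : (M - lam • 1).PosSemidef) (hlam : 0 < lam) : M.PosDef := by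
  simpa using PosDef.posSemidef_add hM (PosDef.one.smul hlam)

variable {ι : Type*} [Fintype ι]

lemma abs_dotProduct_le_sqrt_mul_sqrt (v w : ι → ℝ) :
    |v ⬝ᵥ w| ≤ √(v ⬝ᵥ v) * √(w ⬝ᵥ w) := by
  simpa [EuclideanSpace.inner_eq_star_dotProduct, EuclideanSpace.norm_eq, dotProduct, ← sq,
    mul_comm] using abs_real_inner_le_norm (WithLp.toLp 2 v) (WithLp.toLp 2 w)

lemma sqrt_smul_dotProduct_smul_s9 (c : ℝ) (v : ι → ℝ) :
    √((c • v) ⬝ᵥ (c • v)) = |c| * √(v ⬝ᵥ v) := by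
  rw [smul_dotProduct, dotProduct_smul, smul_smul, smul_eq_mul,
    Real.sqrt_mul (mul_self_nonneg c), Real.sqrt_mul_self_eq_abs]

variable [DecidableEq ι]

section CommRing

variable {K : Type*} [CommRing K] {M : Matrix ι ι K}

lemma mulVec_inv_mulVec (hM : IsUnit M) (v : ι → K) : M *ᵥ (M⁻¹ *ᵥ v) = v := by
  rw [mulVec_mulVec, mul_nonsing_inv _ ((isUnit_iff_isUnit_det M).mp hM), one_mulVec]

lemma inv_mulVec_mulVec (hM : IsUnit M) (v : ι → K) : M⁻¹ *ᵥ (M *ᵥ v) = v := by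
  rw [mulVec_mulVec, nonsing_inv_mul _ ((isUnit_iff_isUnit_det M).mp hM), one_mulVec]

lemma inv_add_smul_vecMulVec_mulVec (hM : IsUnit M) {a : K} {v : ι → K}
    (hH : IsUnit (M + a • vecMulVec v v)) :
    (M + a • vecMulVec v v)⁻¹ *ᵥ v
      = (1 - a * (v ⬝ᵥ (M + a • vecMulVec v v)⁻¹ *ᵥ v)) • (M⁻¹ *ᵥ v) := by
  set u := (M + a • vecMulVec v v)⁻¹ *ᵥ v
  have hMu : M *ᵥ u = (1 - a * (v ⬝ᵥ u)) • v := by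
    calc M *ᵥ u = (M + a • vecMulVec v v) *ᵥ u - (a • vecMulVec v v) *ᵥ u := by
          rw [add_mulVec, add_sub_cancel_right]
      _ = v - (a * (v ⬝ᵥ u)) • v := by
          rw [mulVec_inv_mulVec hH, smul_mulVec, vecMulVec_mulVec, op_smul_eq_smul, smul_smul]
      _ = (1 - a * (v ⬝ᵥ u)) • v := by module
  calc u = M⁻¹ *ᵥ (M *ᵥ u) := (inv_mulVec_mulVec hM u).symm
    _ = _ := by rw [hMu, mulVec_smul]

end CommRing

lemma sqrt_inv_mulVec_le_div {M : Matrix ι ι ℝ} {lam : ℝ}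
    (hM : (M - lam • 1).PosSemidef) (hlam : 0 < lam) (v : ι → ℝ) :
    √((M⁻¹ *ᵥ v) ⬝ᵥ (M⁻¹ *ᵥ v)) ≤ √(v ⬝ᵥ v) / lam := by
  set w := M⁻¹ *ᵥ v
  have hMw : M *ᵥ w = v :=
    mulVec_inv_mulVec (posDef_of_posSemidef_sub_smul_one hM hlam).isUnit v
  have hcoercive : lam * (w ⬝ᵥ w) ≤ w ⬝ᵥ v := by
    have := hM.dotProduct_mulVec_nonneg w
    simp only [star_trivial, sub_mulVec, dotProduct_sub, smul_mulVec, one_mulVec,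
      dotProduct_smul, smul_eq_mul, hMw] at this
    linarith
  have hw : √(w ⬝ᵥ w) ^ 2 = w ⬝ᵥ w :=
    Real.sq_sqrt (by simpa using dotProduct_star_self_nonneg w)
  have hcs := (le_abs_self _).trans (abs_dotProduct_le_sqrt_mul_sqrt w v)
  rw [le_div_iff₀ hlam]
  rcases (Real.sqrt_nonneg (w ⬝ᵥ w)).eq_or_lt with h0 | hpos
  · rw [← h0, zero_mul]; exact Real.sqrt_nonneg _
  · refine le_of_mul_le_mul_right ?_ hpos
    nlinarith

theorem sqrt_inv_add_smul_vecMulVec_mulVec_sub_le {M : Matrix ι ι ℝ} {lam d : ℝ}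
    (hM : (M - lam • 1).PosSemidef) (hlam : 0 < lam) (hd : 0 ≤ d) (v : ι → ℝ) :
    √(((M + d • vecMulVec v v)⁻¹ *ᵥ v - M⁻¹ *ᵥ v) ⬝ᵥ
        ((M + d • vecMulVec v v)⁻¹ *ᵥ v - M⁻¹ *ᵥ v)) ≤ d * √(v ⬝ᵥ v) ^ 3 / lam ^ 2 := by
  set H := M + d • vecMulVec v v
  have hH : (H - lam • 1).PosSemidef := by
    simpa [H, add_sub_right_comm] using hM.add ((posSemidef_vecMulVec_self_star v).smul hd)
  set u := H⁻¹ *ᵥ v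
  set w := M⁻¹ *ᵥ v
  have hu : u = (1 - d * (v ⬝ᵥ u)) • w := inv_add_smul_vecMulVec_mulVec
    (posDef_of_posSemidef_sub_smul_one hM hlam).isUnit
    (posDef_of_posSemidef_sub_smul_one hH hlam).isUnit
  have hdiff : u - w = -(d * (v ⬝ᵥ u)) • w := by
    nth_rw 1 [hu]
    module
  have hvu : |v ⬝ᵥ u| ≤ √(v ⬝ᵥ v) * (√(v ⬝ᵥ v) / lam) :=
    (abs_dotProduct_le_sqrt_mul_sqrt v u).trans
      (mul_le_mul_of_nonneg_left (sqrt_inv_mulVec_le_div hH hlam v) (Real.sqrt_nonneg _))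
  rw [hdiff, sqrt_smul_dotProduct_smul_s9, abs_neg, abs_mul, abs_of_nonneg hd]
  calc d * |v ⬝ᵥ u| * √(w ⬝ᵥ w)
      ≤ d * (√(v ⬝ᵥ v) * (√(v ⬝ᵥ v) / lam)) * (√(v ⬝ᵥ v) / lam) := by
        gcongr
        exact sqrt_inv_mulVec_le_div hM hlam v
    _ = d * √(v ⬝ᵥ v) ^ 3 / lam ^ 2 := by ring

end Matrix

theorem stmt_9_general
    (N D : ℕ)
    (x : Fin N → Fin D → ℝ) (y : Fin N → ℝ)
    (lam : ℝ) (hlam : 0 < lam)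
    (f : ℝ → ℝ → ℝ)
    (hconv : ∀ c : ℝ, ConvexOn ℝ Set.univ (fun z => f z c))
    (hsmooth : ∀ c : ℝ, ContDiff ℝ 2 (fun z => f z c))
    (θhat : Fin D → ℝ)
    (D1 : Fin N → ℝ)
    (D2 : Fin N → ℝ)
    (hD2 : ∀ n, D2 n = iteratedDeriv 2 (fun z => f z (y n)) (x n ⬝ᵥ θhat))
    (H : Matrix (Fin D) (Fin D) ℝ)
    (hH : H = (1 / N : ℝ) • ∑ m, D2 m • Matrix.vecMulVec (x m) (x m) + lam • 1)
    (Hloo : Fin N → Matrix (Fin D) (Fin D) ℝ)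
    (hHloo : ∀ n, Hloo n =
      (1 / N : ℝ) • ∑ m ∈ Finset.univ.erase n, D2 m • Matrix.vecMulVec (x m) (x m) + lam • 1)
    (θIJ : Fin N → Fin D → ℝ)
    (hθIJ : ∀ n, θIJ n = θhat + (D1 n / N) • (H⁻¹ *ᵥ x n))
    (θNS : Fin N → Fin D → ℝ)
    (hθNS : ∀ n, θNS n = θhat + (D1 n / N) • ((Hloo n)⁻¹ *ᵥ x n))
    :
    ∀ n : Fin N,
      Real.sqrt ((θIJ n - θNS n) ⬝ᵥ (θIJ n - θNS n)) ≤
        1 / (N ^ 2 * lam ^ 2) * (|D1 n| * D2 n * Real.sqrt (x n ⬝ᵥ x n) ^ 3) ∧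
      |x n ⬝ᵥ θIJ n - x n ⬝ᵥ θNS n| ≤
        1 / (N ^ 2 * lam ^ 2) * (|D1 n| * D2 n * (x n ⬝ᵥ x n) ^ 2) := by
  intro n
  have hN : (0 : ℝ) < N := by exact_mod_cast n.pos
  have hD2_nonneg (m : Fin N) : 0 ≤ D2 m := hD2 m ▸
    (hconv (y m)).iteratedDeriv_two_nonneg ((hsmooth (y m)).differentiable two_ne_zero) _
  have hHloo_psd : (Hloo n - lam • 1).PosSemidef := by
    rw [hHloo, add_sub_cancel_right]
    refine (posSemidef_sum _ fun m _ => ?_).smul (by positivity)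
    simpa using (posSemidef_vecMulVec_self_star (x m)).smul (hD2_nonneg m)
  have hH_update : H = Hloo n + (D2 n / N) • vecMulVec (x n) (x n) := by
    rw [hH, hHloo, ← Finset.sum_erase_add _ _ (Finset.mem_univ n)]
    module
  have hdiff : θIJ n - θNS n = (D1 n / N) • (H⁻¹ *ᵥ x n - (Hloo n)⁻¹ *ᵥ x n) := by
    rw [hθIJ, hθNS, smul_sub]
    abel
  have hnorm : √((θIJ n - θNS n) ⬝ᵥ (θIJ n - θNS n)) ≤
      1 / (N ^ 2 * lam ^ 2) * (|D1 n| * D2 n * √(x n ⬝ᵥ x n) ^ 3) := by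
    have hupdate := sqrt_inv_add_smul_vecMulVec_mulVec_sub_le hHloo_psd hlam
      (div_nonneg (hD2_nonneg n) hN.le) (x n)
    rw [← hH_update] at hupdate
    rw [hdiff, sqrt_smul_dotProduct_smul_s9, abs_div, Nat.abs_cast]
    calc |D1 n| / N * √((H⁻¹ *ᵥ x n - (Hloo n)⁻¹ *ᵥ x n) ⬝ᵥ (H⁻¹ *ᵥ x n - (Hloo n)⁻¹ *ᵥ x n))
        ≤ |D1 n| / N * (D2 n / N * √(x n ⬝ᵥ x n) ^ 3 / lam ^ 2) := by gcongr
      _ = _ := by field_simp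
  refine ⟨hnorm, ?_⟩
  calc |x n ⬝ᵥ θIJ n - x n ⬝ᵥ θNS n|
      ≤ √(x n ⬝ᵥ x n) * √((θIJ n - θNS n) ⬝ᵥ (θIJ n - θNS n)) := by
        rw [← dotProduct_sub]; exact abs_dotProduct_le_sqrt_mul_sqrt _ _
    _ ≤ √(x n ⬝ᵥ x n) * (1 / (N ^ 2 * lam ^ 2) * (|D1 n| * D2 n * √(x n ⬝ᵥ x n) ^ 3)) := by
        gcongr
    _ = 1 / (N ^ 2 * lam ^ 2) * (|D1 n| * D2 n * (√(x n ⬝ᵥ x n) ^ 2) ^ 2) := by ring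
    _ = _ := by rw [Real.sq_sqrt (by simpa using dotProduct_star_self_nonneg (x n))]

theorem stmt_9
    (N D : ℕ) (hN : 1 ≤ N) (hD : 1 ≤ D)
    (x : Fin N → Fin D → ℝ) (y : Fin N → ℝ)
    (lam : ℝ) (hlam : 0 < lam)
    (f : ℝ → ℝ → ℝ)
    (hconv : ∀ c : ℝ, ConvexOn ℝ Set.univ (fun z => f z c))
    (hsmooth : ∀ c : ℝ, ContDiff ℝ 2 (fun z => f z c))
    (F : (Fin D → ℝ) → ℝ)
    (hF : F = fun θ => (1 / N : ℝ) * ∑ n, f (x n ⬝ᵥ θ) (y n) + lam / 2 * (θ ⬝ᵥ θ))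
    (θhat : Fin D → ℝ)
    (hθhat : ∀ θ, F θhat ≤ F θ)
    (hθhatU : ∀ θ, (∀ θ', F θ ≤ F θ') → θ = θhat)
    (D1 : Fin N → ℝ)
    (hD1 : ∀ n, D1 n = deriv (fun z => f z (y n)) (x n ⬝ᵥ θhat))
    (D2 : Fin N → ℝ)
    (hD2 : ∀ n, D2 n = iteratedDeriv 2 (fun z => f z (y n)) (x n ⬝ᵥ θhat))
    (H : Matrix (Fin D) (Fin D) ℝ)
    (hH : H = (1 / N : ℝ) • ∑ m, D2 m • Matrix.vecMulVec (x m) (x m) + lam • 1)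
    (Hloo : Fin N → Matrix (Fin D) (Fin D) ℝ)
    (hHloo : ∀ n, Hloo n =
      (1 / N : ℝ) • ∑ m ∈ Finset.univ.erase n, D2 m • Matrix.vecMulVec (x m) (x m) + lam • 1)
    (θIJ : Fin N → Fin D → ℝ)
    (hθIJ : ∀ n, θIJ n = θhat + (D1 n / N) • (H⁻¹ *ᵥ x n))
    (θNS : Fin N → Fin D → ℝ)
    (hθNS : ∀ n, θNS n = θhat + (D1 n / N) • ((Hloo n)⁻¹ *ᵥ x n))
    :
    ∀ n : Fin N,
      Real.sqrt ((θIJ n - θNS n) ⬝ᵥ (θIJ n - θNS n)) ≤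
        1 / (N ^ 2 * lam ^ 2) * (|D1 n| * D2 n * Real.sqrt (x n ⬝ᵥ x n) ^ 3) ∧
      |x n ⬝ᵥ θIJ n - x n ⬝ᵥ θNS n| ≤
        1 / (N ^ 2 * lam ^ 2) * (|D1 n| * D2 n * (x n ⬝ᵥ x n) ^ 2) :=
  stmt_9_general N D x y lam hlam f hconv hsmooth θhat D1 D2 hD2 H hH Hloo hHloo θIJ hθIJ θNS hθNS
end

section
/- For every n = 1, …, N, L_n ≤ M_n, where M_n := (max_{z ∈ 𝒵_n} |∂₁³ f(z, y_n)|) · ((1/N) Σ_{m≠n} ‖x_m‖₂²) and 𝒵_n := { z ∈ ℝ : |z| ≤ |x_nᵀθ̂| + |D_n^{(1)}| · ‖x_n‖₂² / (N λ) }. -/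
open Matrix Set

/-!
Restrict both objectives to the line `t ↦ θ̂ + t (θ_{∖n} - θ̂)`. There the leave-one-out objective
is a convex function plus `(λ ‖θ_{∖n} - θ̂‖² / 2) t²`, minimised at `t = 1`, and the full objective
adds the `n`-th loss term and is minimised at `t = 0`. Comparing the two first-order conditions,
with the derivative of the convex part monotone, gives
`λ ‖θ_{∖n} - θ̂‖² ≤ D_n^{(1)} x_nᵀ(θ_{∖n} - θ̂) / N`, and Cauchy–Schwarz turns this into
`|x_nᵀ(θ_{∖n} - θ̂)| ≤ |D_n^{(1)}| ‖x_n‖² / (N λ)`. So the whole segment `x_nᵀ((1 - s) θ̂ + s θ_{∖n})`,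
`s ∈ [0, 1]`, lies in the compact interval `𝒵_n`, on which `|∂₁³ f|` is bounded.
-/

theorem ConvexOn.finset_sum {ι 𝕜 E β : Type*} [Semiring 𝕜] [PartialOrder 𝕜]
    [AddCommMonoid E] [AddCommMonoid β] [PartialOrder β] [IsOrderedAddMonoid β] [SMul 𝕜 E]
    [Module 𝕜 β]
    {S : Set E} (hS : Convex 𝕜 S) {s : Finset ι} {g : ι → E → β}
    (hg : ∀ i ∈ s, ConvexOn 𝕜 S (g i)) : ConvexOn 𝕜 S fun z => ∑ i ∈ s, g i z := by
  classical
  induction s using Finset.induction_on with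
  | empty => exact convexOn_const (0 : β) hS
  | insert i s hi ih =>
    simp only [Finset.sum_insert hi]
    exact (hg i (s.mem_insert_self i)).add (ih fun j hj => hg j (Finset.mem_insert_of_mem hj))

theorem ConvexOn.comp_add_mul {g : ℝ → ℝ} (hg : ConvexOn ℝ univ g) (a b : ℝ) :
    ConvexOn ℝ univ fun t => g (a + t * b) := by
  simpa [Function.comp_def, AffineMap.lineMap_apply_ring', add_comm]
    using hg.comp_affineMap (AffineMap.lineMap a (a + b))

theorem le_deriv_of_isMinOn_of_isMinOn_add {C u : ℝ → ℝ} {u' a k : ℝ}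
    (hC : ConvexOn ℝ univ C) (hCd : Differentiable ℝ C) (hu : HasDerivAt u u' 0)
    (h₀ : IsMinOn (fun t => C t + u t + (a * t + k / 2 * t ^ 2)) univ 0)
    (h₁ : IsMinOn (fun t => C t + (a * t + k / 2 * t ^ 2)) univ 1) : k ≤ u' := by
  have hq (t : ℝ) : HasDerivAt (fun t => a * t + k / 2 * t ^ 2) (a + k * t) t :=
    (((hasDerivAt_id' t).const_mul a).add
      ((hasDerivAt_pow 2 t).const_mul (k / 2))).congr_deriv (by push_cast; ring)
  have e₀ := (h₀.isLocalMin Filter.univ_mem).hasDerivAt_eq_zero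
    (((hCd 0).hasDerivAt.add hu).add (hq 0))
  have e₁ := (h₁.isLocalMin Filter.univ_mem).hasDerivAt_eq_zero ((hCd 1).hasDerivAt.add (hq 1))
  have hmono : deriv C 0 ≤ deriv C 1 :=
    hC.monotoneOn_deriv (fun t _ => hCd t) trivial trivial zero_le_one
  linarith

section RegularizedRisk

variable {ι κ : Type*} [Fintype κ]

noncomputable def regularizedRisk (ℓ : ι → ℝ → ℝ) (x : ι → κ → ℝ) (c lam : ℝ) (s : Finset ι)
    (θ : κ → ℝ) : ℝ :=
  c * ∑ m ∈ s, ℓ m (x m ⬝ᵥ θ) + lam / 2 * (θ ⬝ᵥ θ)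

variable {ℓ : ι → ℝ → ℝ} {x : ι → κ → ℝ} {c lam : ℝ}

theorem regularizedRisk_add_smul (s : Finset ι) (θ d : κ → ℝ) (t : ℝ) :
    regularizedRisk ℓ x c lam s (θ + t • d) =
      (c * ∑ m ∈ s, ℓ m (x m ⬝ᵥ θ + t * (x m ⬝ᵥ d)) + lam / 2 * (θ ⬝ᵥ θ)) +
        (lam * (θ ⬝ᵥ d) * t + lam * (d ⬝ᵥ d) / 2 * t ^ 2) := by
  simp only [regularizedRisk, dotProduct_add, add_dotProduct, dotProduct_smul, smul_dotProduct,
    smul_eq_mul, dotProduct_comm d θ]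
  ring

theorem lam_mul_dotProduct_self_sub_le [DecidableEq ι] (hc : 0 ≤ c)
    (hℓ : ∀ m, ConvexOn ℝ univ (ℓ m)) (hℓd : ∀ m, Differentiable ℝ (ℓ m))
    {s : Finset ι} {n : ι} (hn : n ∈ s) {θ θ' : κ → ℝ}
    (hθ : IsMinOn (regularizedRisk ℓ x c lam s) univ θ)
    (hθ' : IsMinOn (regularizedRisk ℓ x c lam (s.erase n)) univ θ') :
    lam * ((θ' - θ) ⬝ᵥ (θ' - θ)) ≤
      c * deriv (ℓ n) (x n ⬝ᵥ θ) * (x n ⬝ᵥ (θ' - θ)) := by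
  set d := θ' - θ
  set C : ℝ → ℝ := fun t =>
    c * ∑ m ∈ s.erase n, ℓ m (x m ⬝ᵥ θ + t * (x m ⬝ᵥ d)) + lam / 2 * (θ ⬝ᵥ θ)
  set u : ℝ → ℝ := fun t => c * ℓ n (x n ⬝ᵥ θ + t * (x n ⬝ᵥ d))
  have hC : ConvexOn ℝ univ C :=
    ((ConvexOn.finset_sum convex_univ fun m _ => (hℓ m).comp_add_mul _ _).smul hc).add_const _
  have hCd : Differentiable ℝ C := by fun_prop
  have hu : HasDerivAt u (c * deriv (ℓ n) (x n ⬝ᵥ θ) * (x n ⬝ᵥ d)) 0 := by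
    have := ((hℓd n _).hasDerivAt.comp (0 : ℝ)
      (((hasDerivAt_id' (0 : ℝ)).mul_const (x n ⬝ᵥ d)).const_add (x n ⬝ᵥ θ))).const_mul c
    simpa [mul_assoc] using this
  have hline (t : ℝ) : regularizedRisk ℓ x c lam s (θ + t • d) =
      C t + u t + (lam * (θ ⬝ᵥ d) * t + lam * (d ⬝ᵥ d) / 2 * t ^ 2) := by
    rw [regularizedRisk_add_smul, ← Finset.add_sum_erase s _ hn]
    ring
  have hline' (t : ℝ) : regularizedRisk ℓ x c lam (s.erase n) (θ + t • d) =
      C t + (lam * (θ ⬝ᵥ d) * t + lam * (d ⬝ᵥ d) / 2 * t ^ 2) :=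
    regularizedRisk_add_smul _ _ _ _
  refine le_deriv_of_isMinOn_of_isMinOn_add (a := lam * (θ ⬝ᵥ d)) hC hCd hu
    (isMinOn_univ_iff.2 fun t => ?_) (isMinOn_univ_iff.2 fun t => ?_)
  · simpa only [← hline, zero_smul, add_zero] using isMinOn_univ_iff.1 hθ (θ + t • d)
  · simpa only [← hline', one_smul, show θ + d = θ' from add_sub_cancel θ θ']
      using isMinOn_univ_iff.1 hθ' (θ + t • d)

end RegularizedRisk

section DotProduct

variable {κ : Type*} [Fintype κ]

theorem dotProduct_self_nonneg {R : Type*} [Ring R] [LinearOrder R] [IsStrictOrderedRing R]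
    (v : κ → R) : 0 ≤ v ⬝ᵥ v :=
  Finset.sum_nonneg fun i _ => mul_self_nonneg (v i)

theorem abs_dotProduct_le_of_mul_dotProduct_self_le {v d : κ → ℝ} {a lam : ℝ} (hlam : 0 < lam)
    (h : lam * (d ⬝ᵥ d) ≤ a * (v ⬝ᵥ d)) : |v ⬝ᵥ d| ≤ |a| * (v ⬝ᵥ v) / lam := by
  have hcs : (v ⬝ᵥ d) ^ 2 ≤ (v ⬝ᵥ v) * (d ⬝ᵥ d) := by
    simpa only [dotProduct, pow_two] using Finset.sum_mul_sq_le_sq_mul_sq Finset.univ v d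
  have hvv := dotProduct_self_nonneg v
  rw [le_div_iff₀ hlam]
  rcases (abs_nonneg (v ⬝ᵥ d)).eq_or_lt with h0 | hpos
  · rw [← h0, zero_mul]
    exact mul_nonneg (abs_nonneg a) hvv
  refine le_of_mul_le_mul_right ?_ hpos
  calc |v ⬝ᵥ d| * lam * |v ⬝ᵥ d| = lam * (v ⬝ᵥ d) ^ 2 := by rw [← sq_abs]; ring
    _ ≤ lam * ((v ⬝ᵥ v) * (d ⬝ᵥ d)) := by gcongr
    _ = (v ⬝ᵥ v) * (lam * (d ⬝ᵥ d)) := by ring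
    _ ≤ (v ⬝ᵥ v) * (a * (v ⬝ᵥ d)) := by gcongr
    _ ≤ (v ⬝ᵥ v) * (|a| * |v ⬝ᵥ d|) :=
      mul_le_mul_of_nonneg_left ((le_abs_self _).trans (abs_mul a _).le) hvv
    _ = |a| * (v ⬝ᵥ v) * |v ⬝ᵥ d| := by ring

theorem abs_dotProduct_convex_combo_le (v a b : κ → ℝ) {s : ℝ} (hs : s ∈ Icc (0 : ℝ) 1) :
    |v ⬝ᵥ ((1 - s) • a + s • b)| ≤ |v ⬝ᵥ a| + |v ⬝ᵥ (b - a)| := by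
  have : v ⬝ᵥ ((1 - s) • a + s • b) = v ⬝ᵥ a + s * (v ⬝ᵥ (b - a)) := by
    simp only [dotProduct_add, dotProduct_sub, dotProduct_smul, smul_eq_mul]
    ring
  rw [this]
  refine (abs_add_le _ _).trans (add_le_add_right ?_ _)
  rw [abs_mul, abs_of_nonneg hs.1]
  exact mul_le_of_le_one_left (abs_nonneg _) hs.2

end DotProduct

theorem csSup_image_comp_le_of_mapsTo {α X : Type*} [TopologicalSpace X] {g : X → ℝ} {K : Set X}
    (hK : IsCompact K) (hg : ContinuousOn g K) {I : Set α} (hI : I.Nonempty) {p : α → X}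
    (hp : MapsTo p I K) : sSup ((fun s => g (p s)) '' I) ≤ sSup (g '' K) := by
  rw [← image_image]
  exact csSup_le_csSup (hK.bddAbove_image hg) ((hI.image _).image _) (image_mono hp.image_subset)

theorem isCompact_abs_le (r : ℝ) : IsCompact {z : ℝ | |z| ≤ r} := by
  simpa only [Metric.closedBall, dist_zero_right, Real.norm_eq_abs] using
    isCompact_closedBall (0 : ℝ) r

theorem stmt_11_general
    (N D : ℕ)
    (x : Fin N → Fin D → ℝ) (y : Fin N → ℝ)
    (lam : ℝ) (hlam : 0 < lam)
    (f : ℝ → ℝ → ℝ)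
    (hconv : ∀ c : ℝ, ConvexOn ℝ Set.univ (fun z => f z c))
    (hsmooth : ∀ c : ℝ, ContDiff ℝ 3 (fun z => f z c))
    (F : (Fin D → ℝ) → ℝ)
    (hF : F = fun θ => (1 / N : ℝ) * ∑ n, f (x n ⬝ᵥ θ) (y n) + lam / 2 * (θ ⬝ᵥ θ))
    (Floo : Fin N → (Fin D → ℝ) → ℝ)
    (hFloo : ∀ n, Floo n = fun θ =>
      (1 / N : ℝ) * ∑ m ∈ Finset.univ.erase n, f (x m ⬝ᵥ θ) (y m) + lam / 2 * (θ ⬝ᵥ θ))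
    (θhat : Fin D → ℝ)
    (hθhat : ∀ θ, F θhat ≤ F θ)
    (θloo : Fin N → Fin D → ℝ)
    (hθloo : ∀ n θ, Floo n (θloo n) ≤ Floo n θ)
    (D1 : Fin N → ℝ)
    (hD1 : ∀ n, D1 n = deriv (fun z => f z (y n)) (x n ⬝ᵥ θhat))
    (L : Fin N → ℝ)
    (hL : ∀ n, L n = ((1 / N : ℝ) * ∑ m ∈ Finset.univ.erase n, x m ⬝ᵥ x m) *
      sSup ((fun s : ℝ =>
        |iteratedDeriv 3 (fun z => f z (y n)) (x n ⬝ᵥ ((1 - s) • θhat + s • θloo n))|) ''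
        Set.Icc (0 : ℝ) 1))
    :
    ∀ n : Fin N,
      L n ≤
        sSup ((fun z : ℝ => |iteratedDeriv 3 (fun w => f w (y n)) z|) ''
            {z : ℝ | |z| ≤ |x n ⬝ᵥ θhat| + |D1 n| * (x n ⬝ᵥ x n) / (N * lam)}) *
          ((1 / N : ℝ) * ∑ m ∈ Finset.univ.erase n, x m ⬝ᵥ x m) := by
  intro n
  have hshift := lam_mul_dotProduct_self_sub_le (x := x) (c := (1 / N : ℝ)) (by positivity)
    (fun m => hconv (y m)) (fun m => (hsmooth (y m)).differentiable (by norm_num))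
    (Finset.mem_univ n) (isMinOn_univ_iff.2 (hF ▸ hθhat))
    (isMinOn_univ_iff.2 (hFloo n ▸ hθloo n))
  have hbound := abs_dotProduct_le_of_mul_dotProduct_self_le hlam hshift
  have hmaps : MapsTo (fun s : ℝ => x n ⬝ᵥ ((1 - s) • θhat + s • θloo n)) (Icc 0 1)
      {z : ℝ | |z| ≤ |x n ⬝ᵥ θhat| + |D1 n| * (x n ⬝ᵥ x n) / (N * lam)} := by
    intro s hs
    refine (abs_dotProduct_convex_combo_le _ _ _ hs).trans (add_le_add_right ?_ _)
    refine hbound.trans_eq ?_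
    rw [hD1, abs_mul, abs_of_nonneg (by positivity : (0 : ℝ) ≤ 1 / N)]
    ring
  rw [hL n, mul_comm]
  refine mul_le_mul_of_nonneg_right (csSup_image_comp_le_of_mapsTo (isCompact_abs_le _)
    ((hsmooth (y n)).continuous_iteratedDeriv 3 le_rfl).abs.continuousOn
    (nonempty_Icc.2 zero_le_one) hmaps) ?_
  exact mul_nonneg (by positivity) (Finset.sum_nonneg fun m _ => dotProduct_self_nonneg (x m))

theorem stmt_11
    (N D : ℕ) (hN : 1 ≤ N) (hD : 1 ≤ D)
    (x : Fin N → Fin D → ℝ) (y : Fin N → ℝ)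
    (lam : ℝ) (hlam : 0 < lam)
    (f : ℝ → ℝ → ℝ)
    (hconv : ∀ c : ℝ, ConvexOn ℝ Set.univ (fun z => f z c))
    (hsmooth : ∀ c : ℝ, ContDiff ℝ 3 (fun z => f z c))
    (F : (Fin D → ℝ) → ℝ)
    (hF : F = fun θ => (1 / N : ℝ) * ∑ n, f (x n ⬝ᵥ θ) (y n) + lam / 2 * (θ ⬝ᵥ θ))
    (Floo : Fin N → (Fin D → ℝ) → ℝ)
    (hFloo : ∀ n, Floo n = fun θ =>
      (1 / N : ℝ) * ∑ m ∈ Finset.univ.erase n, f (x m ⬝ᵥ θ) (y m) + lam / 2 * (θ ⬝ᵥ θ))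
    (θhat : Fin D → ℝ)
    (hθhat : ∀ θ, F θhat ≤ F θ)
    (hθhatU : ∀ θ, (∀ θ', F θ ≤ F θ') → θ = θhat)
    (θloo : Fin N → Fin D → ℝ)
    (hθloo : ∀ n θ, Floo n (θloo n) ≤ Floo n θ)
    (hθlooU : ∀ n θ, (∀ θ', Floo n θ ≤ Floo n θ') → θ = θloo n)
    (D1 : Fin N → ℝ)
    (hD1 : ∀ n, D1 n = deriv (fun z => f z (y n)) (x n ⬝ᵥ θhat))
    (L : Fin N → ℝ)
    (hL : ∀ n, L n = ((1 / N : ℝ) * ∑ m ∈ Finset.univ.erase n, x m ⬝ᵥ x m) *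
      sSup ((fun s : ℝ =>
        |iteratedDeriv 3 (fun z => f z (y n)) (x n ⬝ᵥ ((1 - s) • θhat + s • θloo n))|) ''
        Set.Icc (0 : ℝ) 1))
    :
    ∀ n : Fin N,
      L n ≤
        sSup ((fun z : ℝ => |iteratedDeriv 3 (fun w => f w (y n)) z|) ''
            {z : ℝ | |z| ≤ |x n ⬝ᵥ θhat| + |D1 n| * (x n ⬝ᵥ x n) / (N * lam)}) *
          ((1 / N : ℝ) * ∑ m ∈ Finset.univ.erase n, x m ⬝ᵥ x m) :=
  stmt_11_general N D x y lam hlam f hconv hsmooth F hF Floo hFloo θhat hθhat θloo hθloo D1 hD1 L hL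
end

section
/- Let λ > 0, let x_1, …, x_N ∈ ℝ^D with each x_n ≠ 0, let c_1, …, c_N ≥ 0, and set H = Σ_{m=1}^N c_m x_m x_mᵀ + λ I_D. Let B̃ ∈ ℝ^{D×D} be symmetric positive semidefinite, set H̃ = B̃ + λ I_D, and suppose 𝓑 ⊆ ℝ^D is a subspace with H v = H̃ v for all v ∈ 𝓑; let 𝓐 = H(𝓑). Define U_n = ‖x_n‖₂² / (λ + c_n ‖x_n‖₂²), Q_n = x_nᵀ H⁻¹ x_n, and Q̃_n = min{ x_nᵀ H̃⁻¹ x_n, U_n }. Then for every n, |Q̃_n − Q_n| ≤ min{ ‖P_{𝓐}^⊥ x_n‖₂² / λ, U_n }, where P_{𝓐}^⊥ denotes the orthogonal projection onto the orthogonal complement of 𝓐. -/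
/-!
On `𝓐 = H(𝓑)` the inverses `H⁻¹` and `H̃⁻¹` agree, so splitting `x = p + q` with `p ∈ 𝓐` and
`q = P_𝓐^⊥ x`, symmetry of the inverses gives `xᵀ(H̃⁻¹ - H⁻¹)x = qᵀ(H̃⁻¹ - H⁻¹)q`. Both quadratic
forms of `q` lie in `[0, ‖q‖² / λ]` because both matrices dominate `λ I`. Clipping at `U_n` costs
nothing since `0 ≤ Q_n ≤ U_n`; the upper bound follows from `Q = yᵀ H y ≥ c_n Q² + λ ‖y‖²` for
`y = H⁻¹ x_n`, together with Cauchy–Schwarz `Q² ≤ ‖x_n‖² ‖y‖²`.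
-/

open Matrix

theorem abs_min_sub_le_min {α : Type*} [AddCommGroup α] [LinearOrder α] [IsOrderedAddMonoid α]
    {a b u : α} (ha : 0 ≤ a) (hb : 0 ≤ b) (hbu : b ≤ u) : |min a u - b| ≤ min |a - b| u := by
  refine le_min ?_ (abs_sub_le_of_nonneg_of_le (le_min ha (hb.trans hbu)) (min_le_right _ _) hb hbu)
  simpa [min_eq_left hbu] using abs_min_sub_min_le_max a u b u

theorem EuclideanSpace.real_norm_sq_eq_dotProduct {n : Type*} [Fintype n] (v : EuclideanSpace ℝ n) :
    ‖v‖ ^ 2 = WithLp.ofLp v ⬝ᵥ WithLp.ofLp v := by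
  rw [EuclideanSpace.real_norm_sq_eq]
  simp [dotProduct, sq]

namespace Matrix

variable {n ι : Type*} [Fintype n] [Fintype ι]

theorem IsSymm.dotProduct_mulVec_comm {R : Type*} [CommSemiring R] {A : Matrix n n R}
    (hA : A.IsSymm) (u v : n → R) : u ⬝ᵥ (A *ᵥ v) = (A *ᵥ u) ⬝ᵥ v := by
  rw [dotProduct_mulVec, ← hA.eq, vecMul_transpose, hA.eq]

theorem IsSymm.dotProduct_add_mulVec_sub {R : Type*} [CommRing R] {A A' : Matrix n n R}
    (hA : A.IsSymm) (hA' : A'.IsSymm) {p : n → R} (h : A *ᵥ p = A' *ᵥ p) (q : n → R) :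
    (p + q) ⬝ᵥ (A *ᵥ (p + q)) - (p + q) ⬝ᵥ (A' *ᵥ (p + q))
      = q ⬝ᵥ (A *ᵥ q) - q ⬝ᵥ (A' *ᵥ q) := by
  have hpq : p ⬝ᵥ (A *ᵥ q) = p ⬝ᵥ (A' *ᵥ q) := by
    rw [hA.dotProduct_mulVec_comm, hA'.dotProduct_mulVec_comm, h]
  simp only [mulVec_add, dotProduct_add, add_dotProduct, hpq, h]
  ring

def weightedScatter (c : ι → ℝ) (x : ι → n → ℝ) : Matrix n n ℝ :=
  ∑ m, c m • vecMulVec (x m) (x m)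

theorem dotProduct_weightedScatter_mulVec (c : ι → ℝ) (x : ι → n → ℝ) (z : n → ℝ) :
    z ⬝ᵥ (weightedScatter c x *ᵥ z) = ∑ m, c m * (x m ⬝ᵥ z) ^ 2 := by
  simp only [weightedScatter, sum_mulVec, smul_mulVec, vecMulVec_mulVec, dotProduct_sum,
    dotProduct_smul, op_smul_eq_smul, smul_eq_mul]
  exact Finset.sum_congr rfl fun m _ => by rw [dotProduct_comm]; ring

theorem posSemidef_weightedScatter {c : ι → ℝ} (hc : ∀ m, 0 ≤ c m) (x : ι → n → ℝ) :
    (weightedScatter c x).PosSemidef :=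
  posSemidef_sum _ fun m _ => by
    simpa using (posSemidef_vecMulVec_self_star (x m)).smul (hc m)

variable [DecidableEq n]

omit [Fintype n] in
theorem PosSemidef.posDef_add_smul_one {B : Matrix n n ℝ} (hB : B.PosSemidef) {lam : ℝ}
    (hlam : 0 < lam) : (B + lam • 1).PosDef :=
  PosDef.posSemidef_add hB (PosDef.one.smul hlam)

theorem PosDef.dotProduct_inv_mulVec_nonneg {A : Matrix n n ℝ} (hA : A.PosDef) (w : n → ℝ) :
    0 ≤ w ⬝ᵥ (A⁻¹ *ᵥ w) := by
  simpa using hA.inv.posSemidef.dotProduct_mulVec_nonneg w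

theorem PosSemidef.dotProduct_inv_add_smul_one_mulVec_le {B : Matrix n n ℝ}
    (hB : B.PosSemidef) {lam : ℝ} (hlam : 0 < lam) (w : n → ℝ) :
    w ⬝ᵥ ((B + lam • 1)⁻¹ *ᵥ w) ≤ (w ⬝ᵥ w) / lam := by
  set z := (B + lam • 1)⁻¹ *ᵥ w
  have hw : w = (B + lam • 1) *ᵥ z := by
    rw [mulVec_mulVec, mul_nonsing_inv _ ((hB.posDef_add_smul_one hlam).isUnit.map detMonoidHom),
      one_mulVec]
  have hBz : 0 ≤ z ⬝ᵥ (B *ᵥ z) := by simpa using hB.dotProduct_mulVec_nonneg z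
  have hBzBz : 0 ≤ (B *ᵥ z) ⬝ᵥ (B *ᵥ z) := by simpa using dotProduct_self_star_nonneg (B *ᵥ z)
  rw [le_div_iff₀' hlam, hw, add_mulVec, smul_mulVec, one_mulVec]
  simp only [add_dotProduct, dotProduct_add, smul_dotProduct, dotProduct_smul, smul_eq_mul,
    dotProduct_comm (B *ᵥ z) z]
  nlinarith [mul_nonneg hlam.le hBz]

theorem PosSemidef.abs_sub_dotProduct_inv_add_smul_one_mulVec_le {B B' : Matrix n n ℝ}
    (hB : B.PosSemidef) (hB' : B'.PosSemidef) {lam : ℝ} (hlam : 0 < lam) (w : n → ℝ) :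
    |w ⬝ᵥ ((B + lam • 1)⁻¹ *ᵥ w) - w ⬝ᵥ ((B' + lam • 1)⁻¹ *ᵥ w)| ≤ (w ⬝ᵥ w) / lam :=
  abs_sub_le_of_nonneg_of_le ((hB.posDef_add_smul_one hlam).dotProduct_inv_mulVec_nonneg w)
    (hB.dotProduct_inv_add_smul_one_mulVec_le hlam w)
    ((hB'.posDef_add_smul_one hlam).dotProduct_inv_mulVec_nonneg w)
    (hB'.dotProduct_inv_add_smul_one_mulVec_le hlam w)

theorem dotProduct_inv_weightedScatter_add_smul_one_mulVec_le {c : ι → ℝ} (hc : ∀ m, 0 ≤ c m)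
    (x : ι → n → ℝ) {lam : ℝ} (hlam : 0 < lam) (k : ι) :
    x k ⬝ᵥ ((weightedScatter c x + lam • 1)⁻¹ *ᵥ x k)
      ≤ (x k ⬝ᵥ x k) / (lam + c k * (x k ⬝ᵥ x k)) := by
  have hB := posSemidef_weightedScatter hc x
  set H := weightedScatter c x + lam • 1
  set y := H⁻¹ *ᵥ x k
  set Q := x k ⬝ᵥ y
  have hHy : H *ᵥ y = x k := by
    rw [mulVec_mulVec, mul_nonsing_inv _ ((hB.posDef_add_smul_one hlam).isUnit.map detMonoidHom),
      one_mulVec]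
  have hQ0 : 0 ≤ Q := (hB.posDef_add_smul_one hlam).dotProduct_inv_mulVec_nonneg (x k)
  have hQ : c k * Q ^ 2 + lam * (y ⬝ᵥ y) ≤ Q :=
    calc c k * Q ^ 2 + lam * (y ⬝ᵥ y)
        ≤ ∑ m, c m * (x m ⬝ᵥ y) ^ 2 + lam * (y ⬝ᵥ y) := by
          gcongr
          exact Finset.single_le_sum (f := fun m => c m * (x m ⬝ᵥ y) ^ 2)
            (fun m _ => mul_nonneg (hc m) (sq_nonneg _)) (Finset.mem_univ k)
      _ = y ⬝ᵥ (H *ᵥ y) := by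
          rw [add_mulVec, dotProduct_add, dotProduct_weightedScatter_mulVec, smul_mulVec,
            one_mulVec, dotProduct_smul, smul_eq_mul]
      _ = Q := by rw [hHy, dotProduct_comm]
  have hCS : Q ^ 2 ≤ (x k ⬝ᵥ x k) * (y ⬝ᵥ y) := by
    simpa [Q, dotProduct, sq] using Finset.sum_mul_sq_le_sq_mul_sq Finset.univ (x k) y
  have hxx : 0 ≤ x k ⬝ᵥ x k := by simpa using dotProduct_self_star_nonneg (x k)
  have hden : 0 < lam + c k * (x k ⬝ᵥ x k) :=
    add_pos_of_pos_of_nonneg hlam (mul_nonneg (hc k) hxx)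
  rw [le_div_iff₀ hden]
  rcases hQ0.eq_or_lt with hQ0 | hQpos
  · rw [← hQ0, zero_mul]
    exact hxx
  · refine le_of_mul_le_mul_left ?_ hQpos
    nlinarith [mul_le_mul_of_nonneg_left hQ hxx, mul_le_mul_of_nonneg_left hCS hlam.le]

theorem inv_mulVec_eq_of_mem_map_toEuclideanLin {𝕜 : Type*} [RCLike 𝕜] {A A' : Matrix n n 𝕜}
    (hA : IsUnit A) (hA' : IsUnit A')
    {V : Submodule 𝕜 (EuclideanSpace 𝕜 n)} (hV : ∀ v ∈ V, A *ᵥ v = A' *ᵥ v)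
    {p : EuclideanSpace 𝕜 n} (hp : p ∈ V.map (toEuclideanLin A)) : A⁻¹ *ᵥ p = A'⁻¹ *ᵥ p := by
  obtain ⟨v, hv, rfl⟩ := Submodule.mem_map.mp hp
  change A⁻¹ *ᵥ (A *ᵥ v) = A'⁻¹ *ᵥ (A *ᵥ v)
  conv_rhs => rw [hV v hv]
  rw [mulVec_mulVec, mulVec_mulVec, nonsing_inv_mul _ (hA.map detMonoidHom),
    nonsing_inv_mul _ (hA'.map detMonoidHom)]

end Matrix

theorem stmt_15_general
    (N D : ℕ) (lam : ℝ) (hlam : 0 < lam)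
    (x : Fin N → EuclideanSpace ℝ (Fin D))
    (c : Fin N → ℝ) (hc : ∀ n, 0 ≤ c n)
    (H : Matrix (Fin D) (Fin D) ℝ)
    (hH : H = ∑ m, c m • Matrix.vecMulVec (x m) (x m) + lam • 1)
    (Bt : Matrix (Fin D) (Fin D) ℝ) (hBt : Bt.PosSemidef)
    (Ht : Matrix (Fin D) (Fin D) ℝ) (hHt : Ht = Bt + lam • 1)
    (𝓑 : Submodule ℝ (EuclideanSpace ℝ (Fin D)))
    (hagree : ∀ v ∈ 𝓑, H *ᵥ v = Ht *ᵥ v)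
    (𝓐 : Submodule ℝ (EuclideanSpace ℝ (Fin D)))
    (h𝓐 : 𝓐 = 𝓑.map (Matrix.toEuclideanLin H))
    (U Q Qt : Fin N → ℝ)
    (hU : ∀ n, U n = (x n ⬝ᵥ x n) / (lam + c n * (x n ⬝ᵥ x n)))
    (hQ : ∀ n, Q n = x n ⬝ᵥ (H⁻¹ *ᵥ x n))
    (hQt : ∀ n, Qt n = min (x n ⬝ᵥ (Ht⁻¹ *ᵥ x n)) (U n)) :
    ∀ n : Fin N,
      |Qt n - Q n| ≤
        min (‖(𝓐ᗮ.orthogonalProjectionOnto (x n) : EuclideanSpace ℝ (Fin D))‖ ^ 2 / lam) (U n) := by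
  intro n
  have hB := posSemidef_weightedScatter hc (fun m => WithLp.ofLp (x m))
  replace hH : H = weightedScatter c (fun m => WithLp.ofLp (x m)) + lam • 1 := hH
  have hHpd : H.PosDef := hH ▸ hB.posDef_add_smul_one hlam
  have hHtpd : Ht.PosDef := hHt ▸ hBt.posDef_add_smul_one hlam
  set q : EuclideanSpace ℝ (Fin D) := 𝓐ᗮ.orthogonalProjectionOnto (x n)
  have hp : x n - q ∈ 𝓐 := by
    have h := Submodule.sub_starProjection_mem_orthogonal (K := 𝓐ᗮ) (x n)
    rwa [Submodule.starProjection_apply, Submodule.orthogonal_orthogonal] at h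
  have hsplit : x n ⬝ᵥ (Ht⁻¹ *ᵥ x n) - Q n = q ⬝ᵥ (Ht⁻¹ *ᵥ q) - q ⬝ᵥ (H⁻¹ *ᵥ q) := by
    have hagree' := inv_mulVec_eq_of_mem_map_toEuclideanLin hHpd.isUnit hHtpd.isUnit hagree
      (h𝓐 ▸ hp)
    have h := IsSymm.dotProduct_add_mulVec_sub (isHermitian_iff_isSymm.mp hHtpd.isHermitian.inv)
      (isHermitian_iff_isSymm.mp hHpd.isHermitian.inv) hagree'.symm q
    rwa [WithLp.ofLp_sub, sub_add_cancel, ← hQ n] at h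
  have hdiff : |x n ⬝ᵥ (Ht⁻¹ *ᵥ x n) - Q n| ≤ ‖q‖ ^ 2 / lam := by
    rw [hsplit, EuclideanSpace.real_norm_sq_eq_dotProduct, hH, hHt]
    exact hBt.abs_sub_dotProduct_inv_add_smul_one_mulVec_le hB hlam q
  have hQU : Q n ≤ U n := by
    rw [hQ n, hU n, hH]
    exact dotProduct_inv_weightedScatter_add_smul_one_mulVec_le hc
      (fun m => WithLp.ofLp (x m)) hlam n
  rw [hQt n]
  refine (abs_min_sub_le_min (hHtpd.dotProduct_inv_mulVec_nonneg _) ?_ hQU).trans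
    (min_le_min_right _ hdiff)
  exact hQ n ▸ hHpd.dotProduct_inv_mulVec_nonneg _

theorem stmt_15
    (N D : ℕ) (lam : ℝ) (hlam : 0 < lam)
    (x : Fin N → EuclideanSpace ℝ (Fin D)) (hx : ∀ n, x n ≠ 0)
    (c : Fin N → ℝ) (hc : ∀ n, 0 ≤ c n)
    (H : Matrix (Fin D) (Fin D) ℝ)
    (hH : H = ∑ m, c m • Matrix.vecMulVec (x m) (x m) + lam • 1)
    (Bt : Matrix (Fin D) (Fin D) ℝ) (hBt : Bt.PosSemidef)
    (Ht : Matrix (Fin D) (Fin D) ℝ) (hHt : Ht = Bt + lam • 1)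
    (𝓑 : Submodule ℝ (EuclideanSpace ℝ (Fin D)))
    (hagree : ∀ v ∈ 𝓑, H *ᵥ v = Ht *ᵥ v)
    (𝓐 : Submodule ℝ (EuclideanSpace ℝ (Fin D)))
    (h𝓐 : 𝓐 = 𝓑.map (Matrix.toEuclideanLin H))
    (U Q Qt : Fin N → ℝ)
    (hU : ∀ n, U n = (x n ⬝ᵥ x n) / (lam + c n * (x n ⬝ᵥ x n)))
    (hQ : ∀ n, Q n = x n ⬝ᵥ (H⁻¹ *ᵥ x n))
    (hQt : ∀ n, Qt n = min (x n ⬝ᵥ (Ht⁻¹ *ᵥ x n)) (U n)) :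
    ∀ n : Fin N,
      |Qt n - Q n| ≤
        min (‖(𝓐ᗮ.orthogonalProjectionOnto (x n) : EuclideanSpace ℝ (Fin D))‖ ^ 2 / lam) (U n) :=
  stmt_15_general N D lam hlam x c hc H hH Bt hBt Ht hHt 𝓑 hagree 𝓐 h𝓐 U Q Qt hU hQ hQt
end
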